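/- Let X be a polyhedral normed space and f : X → X nonexpansive. Call E ⊆ B_{X*} locked if there exist v, w ∈ S_E(f) with J(v−w) = E, and minimal locked if in addition no proper subset of E is locked. If f is also real analytic and E is a minimal locked set, then S_E(f) = x + L_E for any x ∈ S_E(f). -/

import Mathlib

/-!
Write `E = J z` with `z = v - w`. For `φ ∈ J z`, nonexpansiveness makes
`s ↦ φ (f (w + s • z)) - φ (w + s • z)` antitone; it vanishes at `0` and `1`, so by analyticity
it vanishes identically and the whole line `w + ℝ z` lies in `S_E(f)`.

Since the norm is polyhedral, `J (c + t • z) ⊆ J z` for all large `t`. If `y ∈ S_E(f)`, the set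
`J (y - (w - t • z))` is then locked by `y` and `w - t • z`, so minimality makes it equal to
`J z`, and all of `J z` agree on `y - w`. Conversely, if `J z` agrees on `y - w`, then
`J (y - (w - t • z)) = J (w + t • z - y) = J z` for large `t`, and comparing `f y` with `f` at the
two points `w ∓ t • z` of the line gives `φ (f y) ≤ φ y ≤ φ (f y)` for `φ ∈ J z`.
-/

/-- The duality map: `J z` is the set of dual-unit-ball functionals attaining the norm at `z`. -/
def dualityMap {X : Type*} [NormedAddCommGroup X] [NormedSpace ℝ X] (z : X) :
    Set (X →L[ℝ] ℝ) := {φ | ‖φ‖ ≤ 1 ∧ φ z = ‖z‖}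

/-- `S_E(f)`: points where `f` preserves the value of every functional in `E`. -/
def SE {X : Type*} [NormedAddCommGroup X] [NormedSpace ℝ X]
    (f : X → X) (E : Set (X →L[ℝ] ℝ)) : Set X :=
  {x | ∀ φ ∈ E, φ (f x) = φ x}

/-- `E` is locked for `f` if there are `v, w ∈ S_E(f)` with `J(v-w) = E`. -/
def Locked {X : Type*} [NormedAddCommGroup X] [NormedSpace ℝ X]
    (f : X → X) (E : Set (X →L[ℝ] ℝ)) : Prop :=
  ∃ v ∈ SE f E, ∃ w ∈ SE f E, dualityMap (v - w) = E

open Set Filter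

section NormedSpace

variable {X : Type*} [NormedAddCommGroup X] [NormedSpace ℝ X]

lemma apply_le_norm_of_norm_le_one {φ : X →L[ℝ] ℝ} (hφ : ‖φ‖ ≤ 1) (u : X) : φ u ≤ ‖u‖ :=
  (le_abs_self _).trans ((φ.le_of_opNorm_le hφ u).trans_eq (one_mul _))

lemma norm_le_one_of_mem_extremePoints {ψ : X →L[ℝ] ℝ}
    (hψ : ψ ∈ extremePoints ℝ {φ : X →L[ℝ] ℝ | ‖φ‖ ≤ 1}) : ‖ψ‖ ≤ 1 :=
  (extremePoints_subset hψ : ψ ∈ {φ : X →L[ℝ] ℝ | ‖φ‖ ≤ 1})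

lemma dualityMap_nonempty (z : X) : (dualityMap z).Nonempty := by
  obtain ⟨g, hg, hgz⟩ := exists_dual_vector'' ℝ z
  exact ⟨g, hg, by simpa using hgz⟩

lemma mem_dualityMap_smul {φ : X →L[ℝ] ℝ} {z : X} (hφ : φ ∈ dualityMap z) {r : ℝ}
    (hr : 0 ≤ r) : φ ∈ dualityMap (r • z) :=
  ⟨hφ.1, by rw [map_smul, hφ.2, norm_smul, Real.norm_of_nonneg hr, smul_eq_mul]⟩

lemma SE_anti (f : X → X) {E F : Set (X →L[ℝ] ℝ)} (h : E ⊆ F) : SE f F ⊆ SE f E :=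
  fun _ hx φ hφ => hx φ (h hφ)

lemma apply_sub_apply_le_of_mem_dualityMap {f : X → X} (hf : ∀ u v : X, ‖f u - f v‖ ≤ ‖u - v‖)
    {a b : X} {φ : X →L[ℝ] ℝ} (hφ : φ ∈ dualityMap (a - b)) :
    φ (f a) - φ (f b) ≤ φ a - φ b := by
  have h := apply_le_norm_of_norm_le_one hφ.1 (f a - f b)
  have hab : φ (a - b) = ‖a - b‖ := hφ.2
  rw [map_sub] at h hab
  linarith [hf a b]

lemma AnalyticOnNhd.eq_const_of_antitone {g : ℝ → ℝ} (han : AnalyticOnNhd ℝ g univ)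
    (hg : Antitone g) {a b : ℝ} (hab : a < b) (h : g a = g b) (t : ℝ) : g t = g a := by
  have hIcc : ∀ s ∈ Icc a b, g s = g a := fun s hs =>
    le_antisymm (hg hs.1) (h ▸ hg hs.2)
  have hmid : Icc a b ∈ nhds ((a + b) / 2) := Icc_mem_nhds (by linarith) (by linarith)
  exact han.eqOn_of_preconnected_of_eventuallyEq analyticOnNhd_const isPreconnected_univ
    (mem_univ _) (mem_of_superset hmid hIcc) (mem_univ t)

lemma add_smul_mem_SE {f : X → X} (hf_an : ∀ x : X, AnalyticAt ℝ f x)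
    (hf : ∀ u v : X, ‖f u - f v‖ ≤ ‖u - v‖) {w z : X} (hw : w ∈ SE f (dualityMap z))
    (hwz : w + z ∈ SE f (dualityMap z)) (t : ℝ) : w + t • z ∈ SE f (dualityMap z) := by
  intro φ hφ
  set g : ℝ → ℝ := fun s => φ (f (w + s • z)) - φ (w + s • z)
  have hanti : Antitone g := by
    intro s u hsu
    have hdiff : (w + u • z) - (w + s • z) = (u - s) • z := by rw [sub_smul]; abel
    have := apply_sub_apply_le_of_mem_dualityMap hf
      (hdiff ▸ mem_dualityMap_smul hφ (sub_nonneg.2 hsu))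
    simp only [g]
    linarith
  have han : AnalyticOnNhd ℝ g univ := by
    intro s _
    have hline : AnalyticAt ℝ (fun s : ℝ => w + s • z) s :=
      analyticAt_const.add (analyticAt_id.smul analyticAt_const)
    exact ((φ.analyticAt _).comp ((hf_an _).comp hline)).sub ((φ.analyticAt _).comp hline)
  have hg0 : g 0 = 0 := by simp [g, hw φ hφ]
  have hg1 : g 1 = 0 := by simp [g, hwz φ hφ]
  have := han.eq_const_of_antitone hanti zero_lt_one (hg0.trans hg1.symm) t
  simp only [g, hg0] at this
  linarith

/-- The space `L_E`. -/
def equalizer (E : Set (X →L[ℝ] ℝ)) : Submodule ℝ X where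
  carrier := {u | ∀ φ ∈ E, ∀ ψ ∈ E, φ u = ψ u}
  add_mem' hu hv φ hφ ψ hψ := by rw [map_add, map_add, hu φ hφ ψ hψ, hv φ hφ ψ hψ]
  zero_mem' _ _ _ _ := by rw [map_zero, map_zero]
  smul_mem' r _ hu φ hφ ψ hψ := by rw [map_smul, map_smul, hu φ hφ ψ hψ]

lemma apply_eq_of_mem_dualityMap_add_smul {φ : X →L[ℝ] ℝ} {c z : X} {t : ℝ}
    (hφ : φ ∈ dualityMap (c + t • z)) (hφz : φ ∈ dualityMap z) :
    φ c = ‖c + t • z‖ - t * ‖z‖ := by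
  have h := hφ.2
  rw [map_add, map_smul, hφz.2, smul_eq_mul] at h
  linarith

lemma mem_equalizer_of_dualityMap_add_smul_eq {c z : X} {t : ℝ}
    (h : dualityMap (c + t • z) = dualityMap z) : c ∈ equalizer (dualityMap z) := by
  intro φ hφ ψ hψ
  rw [apply_eq_of_mem_dualityMap_add_smul (h ▸ hφ) hφ,
    apply_eq_of_mem_dualityMap_add_smul (h ▸ hψ) hψ]

lemma dualityMap_add_smul_eq_of_mem_equalizer {c z : X} {t : ℝ}
    (hc : c ∈ equalizer (dualityMap z)) (hsub : dualityMap (c + t • z) ⊆ dualityMap z) :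
    dualityMap (c + t • z) = dualityMap z := by
  refine hsub.antisymm fun φ hφ => ⟨hφ.1, ?_⟩
  obtain ⟨ψ, hψ⟩ := dualityMap_nonempty (c + t • z)
  rw [← hψ.2, map_add, map_add, map_smul, map_smul, hc φ hφ ψ (hsub hψ), hφ.2, (hsub hψ).2]

end NormedSpace

section Polyhedral

variable {X : Type*} [NormedAddCommGroup X] [NormedSpace ℝ X] [FiniteDimensional ℝ X]

lemma exists_mem_extremePoints_apply_eq_norm
    (hpoly : (extremePoints ℝ {φ : X →L[ℝ] ℝ | ‖φ‖ ≤ 1}).Finite) (u : X) :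
    ∃ ψ ∈ extremePoints ℝ {φ : X →L[ℝ] ℝ | ‖φ‖ ≤ 1}, ψ u = ‖u‖ := by
  have hball : {φ : X →L[ℝ] ℝ | ‖φ‖ ≤ 1} = Metric.closedBall 0 1 := by
    ext; simp
  have hhull : convexHull ℝ (extremePoints ℝ {φ : X →L[ℝ] ℝ | ‖φ‖ ≤ 1}) =
      {φ : X →L[ℝ] ℝ | ‖φ‖ ≤ 1} := by
    rw [← (hpoly.isClosed_convexHull (𝕜 := ℝ)).closure_eq, hball]
    exact closure_convexHull_extremePoints (isCompact_closedBall _ _) (convex_closedBall _ _)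
  obtain ⟨g, hg, hgu⟩ := dualityMap_nonempty u
  have hg' : g ∈ convexHull ℝ (extremePoints ℝ {φ : X →L[ℝ] ℝ | ‖φ‖ ≤ 1}) := by
    rw [hhull]; exact hg
  obtain ⟨ψ, hψ, hgψ⟩ := ((ContinuousLinearMap.apply ℝ ℝ u).toLinearMap.convexOn
    convex_univ).exists_ge_of_mem_convexHull (subset_univ _) hg'
  refine ⟨ψ, hψ, le_antisymm
    (apply_le_norm_of_norm_le_one (norm_le_one_of_mem_extremePoints hψ) u) ?_⟩
  simpa [hgu] using hgψ

/-- `t ↦ ‖c + t • z‖` is the maximum of the finitely many affine functions `t ↦ ψ c + t * ψ z`,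
`ψ` an extreme point of the dual ball; for large `t` those of largest slope `‖z‖` win. -/
lemma exists_eventually_norm_add_smul_eq
    (hpoly : (extremePoints ℝ {φ : X →L[ℝ] ℝ | ‖φ‖ ≤ 1}).Finite) (c z : X) :
    ∃ a : ℝ, ∀ᶠ t in atTop, ‖c + t • z‖ = a + t * ‖z‖ := by
  set S := {ψ ∈ extremePoints ℝ {φ : X →L[ℝ] ℝ | ‖φ‖ ≤ 1} | ψ z = ‖z‖}
  obtain ⟨ψ₀, hψ₀S, hψ₀max⟩ := S.exists_max_image (fun ψ => ψ c) (hpoly.subset (sep_subset _ _))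
    (exists_mem_extremePoints_apply_eq_norm hpoly z)
  refine ⟨ψ₀ c, ?_⟩
  have hle : ∀ ψ ∈ extremePoints ℝ {φ : X →L[ℝ] ℝ | ‖φ‖ ≤ 1},
      ∀ᶠ t in atTop, ψ c + t * ψ z ≤ ψ₀ c + t * ‖z‖ := by
    intro ψ hψ
    rcases (apply_le_norm_of_norm_le_one (norm_le_one_of_mem_extremePoints hψ) z).eq_or_lt
      with hz | hz
    · exact Eventually.of_forall fun t => by rw [hz]; linarith [hψ₀max ψ ⟨hψ, hz⟩]
    · filter_upwards [eventually_ge_atTop ((ψ c - ψ₀ c) / (‖z‖ - ψ z))] with t ht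
      rw [div_le_iff₀ (sub_pos.2 hz)] at ht
      linarith
  filter_upwards [(hpoly.eventually_all).2 hle] with t ht
  obtain ⟨ψ, hψ, hψt⟩ := exists_mem_extremePoints_apply_eq_norm hpoly (c + t • z)
  have hψ₀t := apply_le_norm_of_norm_le_one (norm_le_one_of_mem_extremePoints hψ₀S.1) (c + t • z)
  simp only [map_add, map_smul, smul_eq_mul, hψ₀S.2] at hψt hψ₀t
  linarith [ht ψ hψ]

lemma eventually_dualityMap_add_smul_subset
    (hpoly : (extremePoints ℝ {φ : X →L[ℝ] ℝ | ‖φ‖ ≤ 1}).Finite) (c z : X) :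
    ∀ᶠ t : ℝ in atTop, dualityMap (c + t • z) ⊆ dualityMap z := by
  obtain ⟨a, ha⟩ := exists_eventually_norm_add_smul_eq hpoly c z
  obtain ⟨T, hT⟩ := eventually_atTop.1 ha
  filter_upwards [eventually_gt_atTop T] with t ht φ hφ
  have hT' := apply_le_norm_of_norm_le_one hφ.1 (c + T • z)
  have ht' := hφ.2
  rw [hT T le_rfl] at hT'
  rw [hT t ht.le] at ht'
  simp only [map_add, map_smul, smul_eq_mul] at hT' ht'
  have hφz : ‖z‖ ≤ φ z := le_of_mul_le_mul_left (by linarith) (sub_pos.2 ht)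
  exact ⟨hφ.1, le_antisymm (apply_le_norm_of_norm_le_one hφ.1 z) hφz⟩

variable {f : X → X} {w z : X}

lemma sub_mem_equalizer_of_mem_SE
    (hpoly : (extremePoints ℝ {φ : X →L[ℝ] ℝ | ‖φ‖ ≤ 1}).Finite)
    (hmin : ∀ G ⊂ dualityMap z, ¬ Locked f G)
    (hline : ∀ t : ℝ, w + t • z ∈ SE f (dualityMap z)) {y : X}
    (hy : y ∈ SE f (dualityMap z)) : y - w ∈ equalizer (dualityMap z) := by
  obtain ⟨t, hsub⟩ := (eventually_dualityMap_add_smul_subset hpoly (y - w) z).exists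
  refine mem_equalizer_of_dualityMap_add_smul_eq (t := t) (by_contra fun hne => ?_)
  refine hmin _ (ssubset_of_subset_of_ne hsub hne)
    ⟨y, SE_anti f hsub hy, w + (-t) • z, SE_anti f hsub (hline _), ?_⟩
  rw [neg_smul, sub_add_eq_sub_sub, sub_neg_eq_add]

lemma mem_SE_of_sub_mem_equalizer
    (hpoly : (extremePoints ℝ {φ : X →L[ℝ] ℝ | ‖φ‖ ≤ 1}).Finite)
    (hf : ∀ u v : X, ‖f u - f v‖ ≤ ‖u - v‖)
    (hline : ∀ t : ℝ, w + t • z ∈ SE f (dualityMap z)) {y : X}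
    (hy : y - w ∈ equalizer (dualityMap z)) : y ∈ SE f (dualityMap z) := by
  intro φ hφ
  obtain ⟨s, hs⟩ := (eventually_dualityMap_add_smul_subset hpoly (y - w) z).exists
  obtain ⟨t, ht⟩ := (eventually_dualityMap_add_smul_subset hpoly (w - y) z).exists
  have hφs : φ ∈ dualityMap (y - (w + (-s) • z)) := by
    rw [neg_smul, sub_add_eq_sub_sub, sub_neg_eq_add, dualityMap_add_smul_eq_of_mem_equalizer hy hs]
    exact hφ
  have hφt : φ ∈ dualityMap ((w + t • z) - y) := by
    have hwy : w - y ∈ equalizer (dualityMap z) := by simpa using neg_mem hy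
    rw [add_sub_right_comm, dualityMap_add_smul_eq_of_mem_equalizer hwy ht]
    exact hφ
  have hup := apply_sub_apply_le_of_mem_dualityMap hf hφs
  have hlow := apply_sub_apply_le_of_mem_dualityMap hf hφt
  rw [hline _ φ hφ] at hup hlow
  linarith

end Polyhedral

theorem stmt_7_general {X : Type*} [NormedAddCommGroup X] [NormedSpace ℝ X]
    [FiniteDimensional ℝ X]
    (hpoly : (Set.extremePoints ℝ {φ : X →L[ℝ] ℝ | ‖φ‖ ≤ 1}).Finite)
    (f : X → X) (hf_an : ∀ x : X, AnalyticAt ℝ f x)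
    (hf : ∀ u v : X, ‖f u - f v‖ ≤ ‖u - v‖)
    (E : Set (X →L[ℝ] ℝ))
    (hlocked : Locked f E) (hmin : ∀ G ⊂ E, ¬ Locked f G)
    (x : X) (hx : x ∈ SE f E) :
    SE f E = (fun z => x + z) '' {u : X | ∀ φ ∈ E, ∀ ψ ∈ E, φ u = ψ u} := by
  obtain ⟨v, hv, w, hw, rfl⟩ := hlocked
  have hline : ∀ t : ℝ, w + t • (v - w) ∈ SE f (dualityMap (v - w)) :=
    add_smul_mem_SE hf_an hf hw (by rwa [add_sub_cancel])
  have hSE : ∀ y, y ∈ SE f (dualityMap (v - w)) ↔ y - w ∈ equalizer (dualityMap (v - w)) :=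
    fun y => ⟨sub_mem_equalizer_of_mem_SE hpoly hmin hline,
      mem_SE_of_sub_mem_equalizer hpoly hf hline⟩
  change _ = (fun z => x + z) '' (equalizer (dualityMap (v - w)) : Set X)
  ext y
  constructor
  · intro hy
    refine ⟨y - x, ?_, add_sub_cancel x y⟩
    simpa using sub_mem ((hSE y).1 hy) ((hSE x).1 hx)
  · rintro ⟨u, hu, rfl⟩
    exact (hSE _).2 (by simpa [add_sub_right_comm] using add_mem ((hSE x).1 hx) hu)

theorem stmt_7 {X : Type*} [NormedAddCommGroup X] [NormedSpace ℝ X]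
    [FiniteDimensional ℝ X]
    (hpoly : (Set.extremePoints ℝ {φ : X →L[ℝ] ℝ | ‖φ‖ ≤ 1}).Finite)
    (f : X → X) (hf_an : ∀ x : X, AnalyticAt ℝ f x)
    (hf : ∀ u v : X, ‖f u - f v‖ ≤ ‖u - v‖)
    (E : Set (X →L[ℝ] ℝ)) (hE : E ⊆ {φ : X →L[ℝ] ℝ | ‖φ‖ ≤ 1})
    (hlocked : Locked f E) (hmin : ∀ G ⊂ E, ¬ Locked f G)
    (x : X) (hx : x ∈ SE f E) :
    SE f E = (fun z => x + z) '' {u : X | ∀ φ ∈ E, ∀ ψ ∈ E, φ u = ψ u} :=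
  stmt_7_general hpoly f hf_an hf E hlocked hmin x hx
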